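/- arXiv:2507.10037 — 4 statements merged into one kernel-verified Lean document; each statement's English description precedes it below -/
import Mathlib

section
/- Let p, q, r, C > 0 be constants with p, r ∈ (0,1), q ∈ (1,2), C ≥ 1 and q + max(p, r) < 2, and let n be sufficiently large in terms of p, q, r, C. Let λ_1 ≥ ⋯ ≥ λ_n be real numbers, and for T ≥ 0 set L_T = {i ∈ [n] : λ_i ≥ T} and S_T = ∑_{i ∈ L_T} λ_i. Suppose (1) −λ_n ≤ Cn^p; (2) ∑_{i=1}^n |λ_i| ≤ Cn^q; and (3) S_T² ≤ Cn · S_{T²/(Cn)} for all T ≥ Cn^r. Then, with s = (q−1)/(1−r), for every H ∈ [n^(p+q−1), n] one has ∑_{i ∉ L_H} λ_i² ≤ (2C^(1+s)/(1−s)) · n^(1+s) H^(1−s). -/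
-- `S_T`, the sum of the eigenvalues that are at least `T`.
noncomputable def SSum {n : ℕ} (mu : Fin n → ℝ) (T : ℝ) : ℝ :=
  ∑ i ∈ Finset.univ.filter (fun i => T ≤ mu i), mu i

open Finset Real Filter
set_option maxHeartbeats 1600000


lemma SSum_nonneg {n : ℕ} (μ : Fin n → ℝ) {t : ℝ} (ht : 0 ≤ t) : 0 ≤ SSum μ t := by
  apply Finset.sum_nonneg
  intro i hi
  have := (Finset.mem_filter.mp hi).2
  linarith

lemma SSum_le_abs {n : ℕ} (μ : Fin n → ℝ) (t : ℝ) : SSum μ t ≤ ∑ i, |μ i| := by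
  refine le_trans (Finset.sum_le_sum (fun i _ => le_abs_self (μ i))) ?_
  exact Finset.sum_le_sum_of_subset_of_nonneg (Finset.filter_subset _ _)
    (fun i _ _ => abs_nonneg _)

lemma myGeomLe {x : ℝ} (h0 : 0 ≤ x) (h1 : x < 1) (M : ℕ) :
    ∑ i ∈ Finset.range M, x ^ i ≤ (1 - x)⁻¹ := by
  have h2 : 0 < 1 - x := by linarith
  rw [geom_sum_eq (by intro h; rw [h] at h1; linarith : x ≠ 1)]
  rw [div_le_iff_of_neg (by linarith : x - 1 < 0)]
  have h3 : 0 ≤ x ^ M := pow_nonneg h0 M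
  have h4 : (1 - x)⁻¹ * (1 - x) = 1 := inv_mul_cancel₀ h2.ne'
  nlinarith

lemma lemA {n : ℕ} (μ : Fin n → ℝ) (C q r s : ℝ) (hC : 1 ≤ C) (hN : 1 ≤ (n : ℝ))
    (hq1 : 1 < q) (hr0 : 0 < r) (hr1 : r < 1) (hs : (1 - r) * s = q - 1) (hs0 : 0 < s)
    (habs : (∑ i, |μ i|) ≤ C * (n : ℝ) ^ q)
    (hrec : ∀ T : ℝ, C * (n : ℝ) ^ r ≤ T →
      (SSum μ T) ^ 2 ≤ C * (n : ℝ) * SSum μ (T ^ 2 / (C * (n : ℝ)))) :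
    ∀ t : ℝ, 0 < t → t ≤ C * (n : ℝ) → SSum μ t ≤ C * (n : ℝ) * (C * (n : ℝ) / t) ^ s := by
  set N := (n : ℝ) with hNdef
  have hN0 : (0:ℝ) < N := lt_of_lt_of_le one_pos hN
  have hC0 : (0:ℝ) < C := lt_of_lt_of_le one_pos hC
  have hCN : (0:ℝ) < C * N := mul_pos hC0 hN0
  have htriv : ∀ t : ℝ, SSum μ t ≤ C * N ^ q := fun t => le_trans (SSum_le_abs μ t) habs
  have e2 : N * N ^ (q - 1) = N ^ q := by
    nth_rewrite 1 [← Real.rpow_one N]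
    rw [← Real.rpow_add hN0]; ring_nf
  have key : ∀ k : ℕ, ∀ t : ℝ, C * N ^ r ≤ t → t ≤ C * N →
      SSum μ t ≤ C * N * (C * N / t) ^ s * (N ^ (q-1) * (t / (C * N)) ^ s) ^ ((2⁻¹ : ℝ) ^ k) := by
    intro k
    induction k with
    | zero =>
      intro t ht1 ht2
      have ht0 : 0 < t := lt_of_lt_of_le (mul_pos hC0 (Real.rpow_pos_of_pos hN0 r)) ht1
      have e1 : (C * N / t) ^ s * (t / (C * N)) ^ s = 1 := by
        rw [← Real.mul_rpow (by positivity) (by positivity)]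
        rw [show C * N / t * (t / (C * N)) = 1 by field_simp]
        exact Real.one_rpow s
      rw [pow_zero, Real.rpow_one]
      calc SSum μ t ≤ C * N ^ q := htriv t
        _ = C * (N * N ^ (q-1)) * 1 := by rw [e2]; ring
        _ = C * N * (C * N / t) ^ s * (N ^ (q-1) * (t / (C * N)) ^ s) := by rw [← e1]; ring
    | succ k ih =>
      intro t ht1 ht2
      have ht0 : 0 < t := lt_of_lt_of_le (mul_pos hC0 (Real.rpow_pos_of_pos hN0 r)) ht1
      set t' := t ^ 2 / (C * N) with ht'def
      have ht'0 : 0 < t' := by positivity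
      have ht'2 : t' ≤ C * N := by
        rw [ht'def, div_le_iff₀ hCN]; nlinarith
      have hrec' := hrec t ht1
      have hu1 : (t / (C*N)) ^ s ≤ 1 :=
        Real.rpow_le_one (by positivity) (by rw [div_le_one hCN]; exact ht2) hs0.le
      have hu0 : (0:ℝ) ≤ (t / (C*N)) ^ s := Real.rpow_nonneg (by positivity) s
      have hM1 : 1 ≤ N ^ (q-1) * (t/(C*N))^s := by
        have h1 : N ^ (r-1) ≤ t / (C*N) := by
          rw [le_div_iff₀ hCN]
          calc N^(r-1) * (C*N) = C * (N^(r-1) * N^(1:ℝ)) := by rw [Real.rpow_one]; ring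
            _ = C * N ^ r := by rw [← Real.rpow_add hN0]; ring_nf
            _ ≤ t := ht1
        have h2 : (N ^ (r-1)) ^ s ≤ (t/(C*N))^s :=
          Real.rpow_le_rpow (by positivity) h1 hs0.le
        have h3 : (N ^ (r-1)) ^ s = N ^ ((r-1)*s) := (Real.rpow_mul hN0.le _ _).symm
        have h4 : N ^ (q-1) * N ^ ((r-1)*s) = 1 := by
          rw [← Real.rpow_add hN0]
          rw [show q - 1 + (r-1)*s = 0 by nlinarith [hs]]
          exact Real.rpow_zero N
        calc (1:ℝ) = N ^ (q-1) * N ^ ((r-1)*s) := h4.symm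
          _ ≤ N ^ (q-1) * (t/(C*N))^s := by
              apply mul_le_mul_of_nonneg_left _ (Real.rpow_nonneg hN0.le _)
              rw [← h3]; exact h2
      have hM0 : (0:ℝ) < N ^ (q-1) * (t/(C*N))^s := by linarith
      by_cases hcase : C * N ^ r ≤ t'
      · have ihh := ih t' hcase ht'2
        have hCNt' : C * N / t' = (C*N/t)^2 := by
          rw [ht'def]; field_simp
        have e3 : (C*N/t')^s = ((C*N/t)^s)^2 := by
          rw [hCNt', ← Real.rpow_natCast (C*N/t) 2, ← Real.rpow_mul (by positivity),
            mul_comm ((2:ℕ):ℝ) s, Real.rpow_mul (by positivity), Real.rpow_natCast]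
        have ht'CN : t' / (C*N) = (t/(C*N))^2 := by
          rw [ht'def]; field_simp
        have e4 : (t'/(C*N))^s = ((t/(C*N))^s)^2 := by
          rw [ht'CN, ← Real.rpow_natCast (t/(C*N)) 2, ← Real.rpow_mul (by positivity),
            mul_comm ((2:ℕ):ℝ) s, Real.rpow_mul (by positivity), Real.rpow_natCast]
        have hM'M : N^(q-1)*(t'/(C*N))^s ≤ N^(q-1)*(t/(C*N))^s := by
          rw [e4]
          apply mul_le_mul_of_nonneg_left _ (Real.rpow_nonneg hN0.le _)
          nlinarith
        have hMe : (N^(q-1)*(t'/(C*N))^s) ^ ((2⁻¹:ℝ)^k) ≤ (N^(q-1)*(t/(C*N))^s) ^ ((2⁻¹:ℝ)^k) :=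
          Real.rpow_le_rpow (by positivity) hM'M (by positivity)
        have e5 : ((N^(q-1)*(t/(C*N))^s) ^ ((2⁻¹:ℝ)^(k+1)))^2
            = (N^(q-1)*(t/(C*N))^s) ^ ((2⁻¹:ℝ)^k) := by
          rw [← Real.rpow_natCast ((N^(q-1)*(t/(C*N))^s) ^ ((2⁻¹:ℝ)^(k+1))) 2,
            ← Real.rpow_mul hM0.le]
          congr 1
          rw [pow_succ]; push_cast; ring
        have hsq : SSum μ t ^ 2
            ≤ (C * N * (C*N/t)^s * (N^(q-1)*(t/(C*N))^s) ^ ((2⁻¹:ℝ)^(k+1))) ^ 2 := by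
          calc SSum μ t ^2 ≤ C*N*SSum μ t' := hrec'
            _ ≤ C*N*(C*N*(C*N/t')^s * (N^(q-1)*(t'/(C*N))^s)^((2⁻¹:ℝ)^k)) :=
                mul_le_mul_of_nonneg_left ihh hCN.le
            _ ≤ C*N*(C*N*((C*N/t)^s)^2 * (N^(q-1)*(t/(C*N))^s)^((2⁻¹:ℝ)^k)) := by
                rw [e3]
                apply mul_le_mul_of_nonneg_left _ hCN.le
                apply mul_le_mul_of_nonneg_left hMe (by positivity)
            _ = (C * N * (C*N/t)^s * (N^(q-1)*(t/(C*N))^s) ^ ((2⁻¹:ℝ)^(k+1))) ^ 2 := by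
                rw [← e5]; ring
        have hR0 : 0 ≤ C * N * (C*N/t)^s * (N^(q-1)*(t/(C*N))^s) ^ ((2⁻¹:ℝ)^(k+1)) := by
          positivity
        have hS0 : 0 ≤ SSum μ t := SSum_nonneg μ ht0.le
        exact (pow_le_pow_iff_left₀ hS0 hR0 two_ne_zero).mp hsq
      · push_neg at hcase
        have hb : SSum μ t ^2 ≤ C*N*(C*N^q) :=
          le_trans hrec' (mul_le_mul_of_nonneg_left (htriv t') hCN.le)
        have hx : N ^ ((1-r)/2) ≤ C*N/t := by
          rw [le_div_iff₀ ht0]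
          have h1 : t^2 < C*N * (C * N^r) := by
            rw [ht'def] at hcase
            rw [div_lt_iff₀ hCN] at hcase
            linarith
          have hsq2 : (N^((1-r)/2))^2 = N^(1-r) := by
            rw [← Real.rpow_natCast (N^((1-r)/2)) 2, ← Real.rpow_mul hN0.le]
            congr 1; push_cast; ring
          have hee : N^(1-r) * N^r = N := by
            rw [← Real.rpow_add hN0]; norm_num
          have h2 : (N^((1-r)/2) * t)^2 ≤ (C*N)^2 := by
            calc (N^((1-r)/2)*t)^2 = N^(1-r) * t^2 := by rw [← hsq2]; ring
              _ ≤ N^(1-r) * (C*N*(C*N^r)) := by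
                  apply mul_le_mul_of_nonneg_left h1.le (Real.rpow_nonneg hN0.le _)
              _ = (C*N) * C * (N^(1-r) * N^r) := by ring
              _ = (C*N)^2 := by rw [hee]; ring
          have := (pow_le_pow_iff_left₀ (by positivity : (0:ℝ) ≤ N^((1-r)/2)*t)
            hCN.le two_ne_zero).mp h2
          linarith
        have hx2 : N^(q-1) ≤ ((C*N/t)^s)^2 := by
          have h1 : (N^((1-r)/2))^s ≤ (C*N/t)^s :=
            Real.rpow_le_rpow (by positivity) hx hs0.le
          have h2 : (N^((1-r)/2))^s = N^((1-r)/2*s) := (Real.rpow_mul hN0.le _ _).symm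
          have h3 : (N^((1-r)/2*s))^2 = N^(q-1) := by
            rw [← Real.rpow_natCast (N^((1-r)/2*s)) 2, ← Real.rpow_mul hN0.le]
            congr 1
            push_cast; nlinarith [hs]
          calc N^(q-1) = (N^((1-r)/2*s))^2 := h3.symm
            _ ≤ ((C*N/t)^s)^2 := by
                rw [← h2]
                apply pow_le_pow_left₀ (by positivity) h1
        have hMe1 : 1 ≤ (N^(q-1)*(t/(C*N))^s) ^ ((2⁻¹:ℝ)^(k+1)) := by
          calc (1:ℝ) = (N^(q-1)*(t/(C*N))^s) ^ (0:ℝ) := (Real.rpow_zero _).symm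
            _ ≤ _ := Real.rpow_le_rpow_of_exponent_le hM1 (by positivity)
        have hsq : SSum μ t ^ 2
            ≤ (C * N * (C*N/t)^s * (N^(q-1)*(t/(C*N))^s) ^ ((2⁻¹:ℝ)^(k+1))) ^ 2 := by
          have hgoal : C*N*(C*N^q) ≤ (C * N * (C*N/t)^s * (N^(q-1)*(t/(C*N))^s) ^ ((2⁻¹:ℝ)^(k+1))) ^ 2 := by
            have hss : (0:ℝ) ≤ ((C*N/t)^s)^2 := by positivity
            have h1le : (1:ℝ) ≤ ((N^(q-1)*(t/(C*N))^s) ^ ((2⁻¹:ℝ)^(k+1)))^2 := by nlinarith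
            calc C*N*(C*N^q) = (C*N)^2 * N^(q-1) := by rw [← e2]; ring
              _ ≤ (C*N)^2 * ((C*N/t)^s)^2 := by
                  apply mul_le_mul_of_nonneg_left hx2 (by positivity)
              _ = (C*N)^2 * ((C*N/t)^s)^2 * 1 := by ring
              _ ≤ (C*N)^2 * ((C*N/t)^s)^2 * (((N^(q-1)*(t/(C*N))^s) ^ ((2⁻¹:ℝ)^(k+1)))^2) := by
                  apply mul_le_mul_of_nonneg_left h1le (by positivity)
              _ = _ := by ring
          linarith
        have hR0 : 0 ≤ C * N * (C*N/t)^s * (N^(q-1)*(t/(C*N))^s) ^ ((2⁻¹:ℝ)^(k+1)) := by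
          positivity
        have hS0 : 0 ≤ SSum μ t := SSum_nonneg μ ht0.le
        exact (pow_le_pow_iff_left₀ hS0 hR0 two_ne_zero).mp hsq
  intro t ht0 htCN
  by_cases hcase : C * N ^ r ≤ t
  · have hM0 : (0:ℝ) < N ^ (q-1) * (t/(C*N))^s := by positivity
    have h1 : Tendsto (fun k : ℕ => ((2⁻¹:ℝ)^k)) atTop (nhds 0) :=
      tendsto_pow_atTop_nhds_zero_of_lt_one (by norm_num) (by norm_num)
    have h2 : ContinuousAt (fun y : ℝ => (N^(q-1)*(t/(C*N))^s) ^ y) 0 :=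
      Real.continuousAt_const_rpow hM0.ne'
    have h3 := h2.tendsto.comp h1
    rw [Real.rpow_zero] at h3
    have h4 := h3.const_mul (C*N*(C*N/t)^s)
    rw [mul_one] at h4
    exact ge_of_tendsto' h4 (fun k => key k t hcase htCN)
  · push_neg at hcase
    have h2 : N^(1-r) ≤ C*N/t := by
      rw [le_div_iff₀ ht0]
      calc N^(1-r)*t ≤ N^(1-r)*(C*N^r) := by
            apply mul_le_mul_of_nonneg_left hcase.le (Real.rpow_nonneg hN0.le _)
        _ = C*(N^(1-r)*N^r) := by ring
        _ = C*N := by rw [← Real.rpow_add hN0]; norm_num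
    have h3 : N^(q-1) ≤ (C*N/t)^s := by
      calc N^(q-1) = (N^(1-r))^s := by rw [← hs, Real.rpow_mul hN0.le]
        _ ≤ (C*N/t)^s := Real.rpow_le_rpow (by positivity) h2 hs0.le
    calc SSum μ t ≤ C*N^q := htriv t
      _ = C*N*N^(q-1) := by rw [← e2]; ring
      _ ≤ C*N*(C*N/t)^s := mul_le_mul_of_nonneg_left h3 hCN.le

theorem stmt7 (p q r C : ℝ)
    (hp : p ∈ Set.Ioo (0 : ℝ) 1) (hr : r ∈ Set.Ioo (0 : ℝ) 1)
    (hq : q ∈ Set.Ioo (1 : ℝ) 2) (hC : 1 ≤ C)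
    (hqr : q + max p r < 2) :
    ∃ n₀ : ℕ, ∀ (n : ℕ) (hn : n₀ ≤ n) (hn1 : 1 ≤ n) (μ : Fin n → ℝ),
      Antitone μ →
      -(C * (n : ℝ) ^ p) ≤ μ ⟨n - 1, by omega⟩ →
      (∑ i, |μ i|) ≤ C * (n : ℝ) ^ q →
      (∀ T : ℝ, C * (n : ℝ) ^ r ≤ T →
        (SSum μ T) ^ 2 ≤ C * (n : ℝ) * SSum μ (T ^ 2 / (C * (n : ℝ)))) →
      ∀ H ∈ Set.Icc ((n : ℝ) ^ (p + q - 1)) (n : ℝ),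
        (∑ i ∈ Finset.univ.filter (fun i => μ i < H), μ i ^ 2) ≤
          (2 * C ^ (1 + (q - 1) / (1 - r)) / (1 - (q - 1) / (1 - r))) *
            (n : ℝ) ^ (1 + (q - 1) / (1 - r)) * H ^ (1 - (q - 1) / (1 - r)) := by
  obtain ⟨hp0, hp1⟩ := hp
  obtain ⟨hr0, hr1⟩ := hr
  obtain ⟨hq1, hq2⟩ := hq
  have hC0 : (0:ℝ) < C := lt_of_lt_of_le one_pos hC
  set s : ℝ := (q-1)/(1-r) with hsdef
  have hr1' : (0:ℝ) < 1 - r := by linarith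
  have hs : (1-r)*s = q-1 := by rw [hsdef]; field_simp
  have hs0 : 0 < s := div_pos (by linarith) hr1'
  have hs1 : s < 1 := by
    rw [hsdef, div_lt_one hr1']
    have := le_max_right p r; linarith
  have hs1' : (0:ℝ) < 1 - s := by linarith
  have hpq2 : p + q < 2 := by have := le_max_left p r; linarith
  have hδ : 0 < s * (2 - p - q) := mul_pos hs0 (by linarith)
  have htd : Tendsto (fun n : ℕ => (n:ℝ) ^ (s*(2-p-q))) atTop atTop :=
    (tendsto_rpow_atTop hδ).comp tendsto_natCast_atTop_atTop
  obtain ⟨n₀, hn₀⟩ := Filter.eventually_atTop.mp (htd.eventually_ge_atTop (8*C))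
  refine ⟨n₀, ?_⟩
  intro n hn hn1 μ hmono hlow habs hrec H hH
  have hNbig : 8*C ≤ (n:ℝ)^(s*(2-p-q)) := hn₀ n hn
  set N := (n:ℝ) with hNdef
  have hN1 : (1:ℝ) ≤ N := by rw [hNdef]; exact_mod_cast hn1
  have hN0 : (0:ℝ) < N := by linarith
  have hCN : (0:ℝ) < C*N := by positivity
  obtain ⟨hHlo, hHhi⟩ := hH
  have hpq1 : (0:ℝ) < p + q - 1 := by linarith
  have hH1 : (1:ℝ) ≤ H := le_trans (Real.one_le_rpow hN1 hpq1.le) hHlo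
  have hH0 : (0:ℝ) < H := by linarith
  have e2 : N * N^(q-1) = N^q := by
    nth_rewrite 1 [← Real.rpow_one N]
    rw [← Real.rpow_add hN0]; ring_nf
  have hA := lemA μ C q r s hC hN1 hq1 hr0 hr1 hs hs0 habs hrec
  have hA' : ∀ t : ℝ, 0 < t → t ≤ C*N → t * SSum μ t ≤ (C*N)^(1+s) * t^(1-s) := by
    intro t ht0 htCN
    have h1 := hA t ht0 htCN
    have hts : (0:ℝ) < t^s := Real.rpow_pos_of_pos ht0 s
    have h2 : t * (C*N*(C*N/t)^s) = (C*N)^(1+s) * t^(1-s) := by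
      rw [Real.div_rpow hCN.le ht0.le, Real.rpow_add hCN 1 s, Real.rpow_one,
        Real.rpow_sub ht0, Real.rpow_one]
      field_simp
    calc t * SSum μ t ≤ t * (C*N*(C*N/t)^s) := by
          apply mul_le_mul_of_nonneg_left h1 ht0.le
      _ = (C*N)^(1+s) * t^(1-s) := h2
  -- dyadic thresholds
  set T : ℕ → ℝ := fun m => H / 2^m with hTdef
  have hT0 : ∀ m, 0 < T m := fun m => div_pos hH0 (by positivity)
  have h2m1 : ∀ m : ℕ, (1:ℝ) ≤ 2^m := fun m => one_le_pow₀ (by norm_num)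
  have hTH : ∀ m, T m ≤ H := fun m => div_le_self hH0.le (h2m1 m)
  have hTCN : ∀ m, T m ≤ C*N := fun m =>
    le_trans (hTH m) (le_trans hHhi (le_mul_of_one_le_left hN0.le hC))
  set a : ℕ → ℝ := fun m => T m * SSum μ (T m) with hadef
  have ha0 : ∀ m, 0 ≤ a m := fun m => mul_nonneg (hT0 m).le (SSum_nonneg μ (hT0 m).le)
  have hhalf : ∀ m : ℕ, T m = 2 * T (m+1) := by
    intro m
    simp only [hTdef]
    rw [pow_succ]
    field_simp
  have hstep : ∀ m : ℕ,
      (∑ i ∈ univ.filter (fun i => μ i < T m), μ i ^2) ≤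
        (∑ i ∈ univ.filter (fun i => μ i < T (m+1)), μ i ^2) + (2 * a (m+1) - a m) := by
    intro m
    have hTlt : T (m+1) < T m := by
      have := hT0 (m+1); rw [hhalf m]; linarith
    have hsplit1 : (univ.filter (fun i => μ i < T m) : Finset (Fin n)) =
        univ.filter (fun i => μ i < T (m+1)) ∪
          univ.filter (fun i => T (m+1) ≤ μ i ∧ μ i < T m) := by
      ext i
      simp only [Finset.mem_union, Finset.mem_filter, Finset.mem_univ, true_and]
      constructor
      · intro h
        rcases lt_or_ge (μ i) (T (m+1)) with h'|h'
        · exact Or.inl h'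
        · exact Or.inr ⟨h', h⟩
      · rintro (h|⟨h1,h2⟩)
        · linarith
        · exact h2
    have hdisj1 : Disjoint (univ.filter (fun i => μ i < T (m+1)))
        (univ.filter (fun i => T (m+1) ≤ μ i ∧ μ i < T m)) := by
      rw [Finset.disjoint_left]
      intro i h1 h2
      simp only [Finset.mem_filter, Finset.mem_univ, true_and] at h1 h2
      linarith [h2.1]
    have hsplit2 : (univ.filter (fun i => T (m+1) ≤ μ i) : Finset (Fin n)) =
        univ.filter (fun i => T (m+1) ≤ μ i ∧ μ i < T m) ∪
          univ.filter (fun i => T m ≤ μ i) := by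
      ext i
      simp only [Finset.mem_union, Finset.mem_filter, Finset.mem_univ, true_and]
      constructor
      · intro h
        rcases lt_or_ge (μ i) (T m) with h'|h'
        · exact Or.inl ⟨h, h'⟩
        · exact Or.inr h'
      · rintro (⟨h1,h2⟩|h)
        · exact h1
        · linarith
    have hdisj2 : Disjoint (univ.filter (fun i => T (m+1) ≤ μ i ∧ μ i < T m))
        (univ.filter (fun i => T m ≤ μ i)) := by
      rw [Finset.disjoint_left]
      intro i h1 h2
      simp only [Finset.mem_filter, Finset.mem_univ, true_and] at h1 h2
      linarith [h1.2]
    have hS : SSum μ (T (m+1)) =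
        (∑ i ∈ univ.filter (fun i => T (m+1) ≤ μ i ∧ μ i < T m), μ i) + SSum μ (T m) := by
      rw [SSum, SSum, hsplit2, Finset.sum_union hdisj2]
    have hsq : (∑ i ∈ univ.filter (fun i => T (m+1) ≤ μ i ∧ μ i < T m), μ i^2) ≤
        2 * T (m+1) * (∑ i ∈ univ.filter (fun i => T (m+1) ≤ μ i ∧ μ i < T m), μ i) := by
      rw [Finset.mul_sum]
      apply Finset.sum_le_sum
      intro i hi
      simp only [Finset.mem_filter, Finset.mem_univ, true_and] at hi
      obtain ⟨h1, h2⟩ := hi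
      have h0 : 0 ≤ μ i := le_trans (hT0 (m+1)).le h1
      have h3 : μ i < 2 * T (m+1) := by rw [← hhalf m]; exact h2
      nlinarith
    have hee : 2*a (m+1) - a m =
        2 * T (m+1) * (∑ i ∈ univ.filter (fun i => T (m+1) ≤ μ i ∧ μ i < T m), μ i) := by
      simp only [hadef]
      rw [hS, hhalf m]
      ring
    rw [hsplit1, Finset.sum_union hdisj1, hee]
    linarith
  have hiter : ∀ K : ℕ, (∑ i ∈ univ.filter (fun i => μ i < T 0), μ i ^2) ≤
      (∑ i ∈ univ.filter (fun i => μ i < T K), μ i ^2) +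
        ∑ m ∈ Finset.range K, (2*a (m+1) - a m) := by
    intro K
    induction K with
    | zero => simp
    | succ K ih =>
      rw [Finset.sum_range_succ]
      linarith [hstep K, ih]
  have hgeom : ∑ m ∈ Finset.range (n+1), (2*a (m+1) - a m) =
      (∑ m ∈ Finset.range (n+1), a (m+1)) + (a (n+1) - a 0) := by
    rw [← Finset.sum_range_sub a (n+1), ← Finset.sum_add_distrib]
    apply Finset.sum_congr rfl
    intro m _
    ring
  have hTn1 : T (n+1) ≤ 1 := by
    simp only [hTdef]
    rw [div_le_one (by positivity)]
    have h1 : (n:ℝ) < 2^n := by exact_mod_cast (Nat.lt_two_pow_self (n := n))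
    have h2 : (2:ℝ)^n ≤ 2^(n+1) := by
      apply pow_le_pow_right₀ (by norm_num)
      omega
    calc H ≤ N := hHhi
      _ ≤ 2^(n+1) := by rw [hNdef]; linarith
  -- main geometric sum bound
  have hmain : ∑ m ∈ Finset.range (n+1), a (m+1) ≤
      (3/2)/(1-s) * (C^(1+s)*N^(1+s)*H^(1-s)) := by
    set x : ℝ := (2:ℝ)^(s-1) with hxdef
    have hx0 : 0 < x := Real.rpow_pos_of_pos two_pos _
    have hx1 : x < 1 := Real.rpow_lt_one_of_one_lt_of_neg one_lt_two (by linarith)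
    have hTpow : ∀ m : ℕ, (T (m+1))^(1-s) = H^(1-s) * x^(m+1) := by
      intro m
      simp only [hTdef]
      rw [Real.div_rpow hH0.le (by positivity), div_eq_mul_inv]
      congr 1
      rw [← Real.rpow_natCast (2:ℝ) (m+1), ← Real.rpow_mul (by norm_num : (0:ℝ) ≤ 2)]
      rw [hxdef, ← Real.rpow_natCast ((2:ℝ)^(s-1)) (m+1),
        ← Real.rpow_mul (by norm_num : (0:ℝ) ≤ 2)]
      rw [← Real.rpow_neg (by norm_num : (0:ℝ) ≤ 2)]
      congr 1
      ring
    have hsumle : ∑ m ∈ Finset.range (n+1), x^(m+1) ≤ (3/2)/(1-s) := by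
      have hsum : ∑ m ∈ Finset.range (n+1), x^(m+1) =
          x * ∑ m ∈ Finset.range (n+1), x^m := by
        rw [Finset.mul_sum]
        apply Finset.sum_congr rfl
        intro m _
        ring
      have hg := myGeomLe hx0.le hx1 (n+1)
      have hinv : x * (2:ℝ)^(1-s) = 1 := by
        rw [hxdef, ← Real.rpow_add two_pos]
        norm_num
      have hexp : 1 + Real.log 2 * (1-s) ≤ (2:ℝ)^(1-s) := by
        rw [Real.rpow_def_of_pos two_pos]
        linarith [Real.add_one_le_exp (Real.log 2 * (1-s))]
      have hlog : (2:ℝ)/3 ≤ Real.log 2 := by linarith [Real.log_two_gt_d9]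
      have hkey : 1 + (1-s)*(2/3) ≤ (2:ℝ)^(1-s) := by nlinarith
      have h1x : x * ((1-s)*(2/3)) ≤ 1 - x := by nlinarith
      have h1x0 : 0 < 1 - x := by nlinarith
      calc ∑ m ∈ Finset.range (n+1), x^(m+1) = x * ∑ m ∈ Finset.range (n+1), x^m := hsum
        _ ≤ x * (1-x)⁻¹ := by apply mul_le_mul_of_nonneg_left hg hx0.le
        _ ≤ (3/2)/(1-s) := by
            rw [← div_eq_mul_inv, div_le_div_iff₀ h1x0 hs1']
            nlinarith
    have hBB : (C*N)^(1+s) = C^(1+s) * N^(1+s) := Real.mul_rpow hC0.le hN0.le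
    calc ∑ m ∈ Finset.range (n+1), a (m+1)
        ≤ ∑ m ∈ Finset.range (n+1), (C*N)^(1+s) * (T (m+1))^(1-s) := by
          apply Finset.sum_le_sum
          intro m _
          exact hA' (T (m+1)) (hT0 _) (hTCN _)
      _ = (C*N)^(1+s) * H^(1-s) * ∑ m ∈ Finset.range (n+1), x^(m+1) := by
          rw [Finset.mul_sum]
          apply Finset.sum_congr rfl
          intro m _
          rw [hTpow m]
          ring
      _ ≤ (C*N)^(1+s) * H^(1-s) * ((3/2)/(1-s)) := by
          apply mul_le_mul_of_nonneg_left hsumle (by positivity)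
      _ = (3/2)/(1-s) * (C^(1+s)*N^(1+s)*H^(1-s)) := by rw [hBB]; ring
  have han1 : a (n+1) ≤ C*N^q := by
    have h1 : SSum μ (T (n+1)) ≤ C*N^q := le_trans (SSum_le_abs μ _) habs
    calc a (n+1) = T (n+1) * SSum μ (T (n+1)) := rfl
      _ ≤ 1 * (C*N^q) := by
          apply mul_le_mul hTn1 h1 (SSum_nonneg μ (hT0 _).le) one_pos.le
      _ = C*N^q := one_mul _
  have hsmall : (∑ i ∈ univ.filter (fun i => μ i < T (n+1)), μ i ^2) ≤
      N + C^2 * N^(p+q) := by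
    have hNp0 : (0:ℝ) ≤ C*N^p := by positivity
    have hpt : ∀ i ∈ univ.filter (fun i => μ i < T (n+1)),
        μ i ^2 ≤ 1 + (C*N^p) * |μ i| := by
      intro i hi
      simp only [Finset.mem_filter, Finset.mem_univ, true_and] at hi
      have hiT : μ i < 1 := lt_of_lt_of_le hi hTn1
      rcases le_or_gt (|μ i|) 1 with h|h
      · have h1 : μ i ^2 ≤ 1 := by nlinarith [abs_nonneg (μ i), sq_abs (μ i)]
        nlinarith [mul_nonneg hNp0 (abs_nonneg (μ i))]
      · have hneg : μ i < 0 := by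
          rcases le_or_gt 0 (μ i) with h'|h'
          · rw [abs_of_nonneg h'] at h; linarith
          · exact h'
        have habsi : |μ i| = -μ i := abs_of_neg hneg
        have hile : i ≤ (⟨n-1, by omega⟩ : Fin n) := by
          rw [Fin.le_def]
          have := i.isLt
          simp only
          omega
        have hlast : μ ⟨n-1, by omega⟩ ≤ μ i := hmono hile
        have hb : -μ i ≤ C*N^p := by
          have := hlow
          linarith
        nlinarith
    calc (∑ i ∈ univ.filter (fun i => μ i < T (n+1)), μ i^2)
        ≤ ∑ i ∈ univ.filter (fun i => μ i < T (n+1)), (1 + (C*N^p)*|μ i|) :=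
          Finset.sum_le_sum hpt
      _ ≤ ∑ i : Fin n, (1 + (C*N^p)*|μ i|) := by
          apply Finset.sum_le_sum_of_subset_of_nonneg (Finset.filter_subset _ _)
          intro i _ _
          positivity
      _ = n + (C*N^p) * ∑ i, |μ i| := by
          rw [Finset.sum_add_distrib, Finset.sum_const, ← Finset.mul_sum]
          simp [Finset.card_univ]
      _ ≤ N + (C*N^p)*(C*N^q) := by
          have := mul_le_mul_of_nonneg_left habs hNp0
          rw [hNdef]
          linarith
      _ = N + C^2 * (N^p*N^q) := by ring
      _ = N + C^2 * N^(p+q) := by rw [← Real.rpow_add hN0]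
  -- junk absorption
  have hjunk : N + C^2*N^(p+q) + C*N^q ≤ (1/2)/(1-s) * (C^(1+s)*N^(1+s)*H^(1-s)) := by
    have h1 : N ≤ N^(p+q) := by
      nth_rewrite 1 [← Real.rpow_one N]
      exact Real.rpow_le_rpow_of_exponent_le hN1 (by linarith)
    have h2 : N^q ≤ N^(p+q) := Real.rpow_le_rpow_of_exponent_le hN1 (by linarith)
    have h3 : (N^(p+q-1))^(1-s) ≤ H^(1-s) := Real.rpow_le_rpow (by positivity) hHlo (by linarith)
    have h4 : (N^(p+q-1))^(1-s) = N^((p+q-1)*(1-s)) := (Real.rpow_mul hN0.le _ _).symm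
    have h5 : N^(1+s) * N^((p+q-1)*(1-s)) = N^(p+q) * N^(s*(2-p-q)) := by
      rw [← Real.rpow_add hN0, ← Real.rpow_add hN0]
      congr 1
      ring
    have h6 : C ≤ C^(1+s) := by
      nth_rewrite 1 [← Real.rpow_one C]
      exact Real.rpow_le_rpow_of_exponent_le hC (by linarith)
    have hNpq0 : (0:ℝ) ≤ N^(p+q) := by positivity
    have hc1 : C*N^(p+q) ≤ C^2*N^(p+q) := by nlinarith [mul_nonneg (mul_nonneg hC0.le (by linarith : (0:ℝ) ≤ C-1)) hNpq0]
    have hc2 : N^(p+q) ≤ C^2*N^(p+q) := by nlinarith [mul_nonneg (by nlinarith : (0:ℝ) ≤ C^2-1) hNpq0]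
    have hL : N + C^2*N^(p+q) + C*N^q ≤ 3*(C^2*N^(p+q)) := by
      have := mul_le_mul_of_nonneg_left h2 hC0.le
      linarith
    have hchain : 8*C*(C*N^(p+q)) ≤ C^(1+s)*N^(1+s)*H^(1-s) := by
      calc 8*C*(C*N^(p+q)) = C*(N^(p+q)*(8*C)) := by ring
        _ ≤ C*(N^(p+q)*N^(s*(2-p-q))) := by
            apply mul_le_mul_of_nonneg_left _ hC0.le
            apply mul_le_mul_of_nonneg_left hNbig (by positivity)
        _ = C*(N^(1+s)*N^((p+q-1)*(1-s))) := by rw [h5]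
        _ ≤ C^(1+s)*(N^(1+s)*N^((p+q-1)*(1-s))) := by
            apply mul_le_mul_of_nonneg_right h6 (by positivity)
        _ = C^(1+s)*N^(1+s)*(N^(p+q-1))^(1-s) := by rw [h4]; ring
        _ ≤ C^(1+s)*N^(1+s)*H^(1-s) := by
            apply mul_le_mul_of_nonneg_left h3 (by positivity)
    have hB0 : (0:ℝ) ≤ C^(1+s)*N^(1+s)*H^(1-s) := by positivity
    have hfrac : (1/2:ℝ)*(C^(1+s)*N^(1+s)*H^(1-s)) ≤
        (1/2)/(1-s) * (C^(1+s)*N^(1+s)*H^(1-s)) := by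
      apply mul_le_mul_of_nonneg_right _ hB0
      rw [div_le_div_iff₀ (by norm_num) hs1']
      nlinarith
    linarith
  -- assemble
  have hiterK := hiter (n+1)
  rw [hgeom] at hiterK
  have hT0H : T 0 = H := by simp [hTdef]
  rw [show (univ.filter (fun i => μ i < T 0) : Finset (Fin n)) =
      univ.filter (fun i => μ i < H) from by rw [hT0H]] at hiterK
  have ha00 := ha0 0
  have hfin : (∑ i ∈ univ.filter (fun i => μ i < H), μ i^2) ≤
      (2/(1-s)) * (C^(1+s)*N^(1+s)*H^(1-s)) := by
    have : (3/2)/(1-s) * (C^(1+s)*N^(1+s)*H^(1-s)) +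
        (1/2)/(1-s) * (C^(1+s)*N^(1+s)*H^(1-s)) =
        (2/(1-s)) * (C^(1+s)*N^(1+s)*H^(1-s)) := by
      field_simp
      ring
    linarith [hsmall, hmain, han1, hjunk]
  calc (∑ i ∈ univ.filter (fun i => μ i < H), μ i^2)
      ≤ (2/(1-s)) * (C^(1+s)*N^(1+s)*H^(1-s)) := hfin
    _ = 2 * C^(1+s) / (1-s) * N^(1+s) * H^(1-s) := by ring
end

section
/- For any graph G on n vertices, sp*(G) ≥ (1/2) ∑_{i : λ_i ≤ 0} (−λ_i) = (1/4) E(G), where E(G) = ∑_{i=1}^n |λ_i| is the energy of G. -/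
-- The adjacency matrix of a simple graph, over `ℝ`.
open scoped Classical in
noncomputable def adjMat {V : Type*} (G : SimpleGraph V) : Matrix V V ℝ :=
  Matrix.of fun i j => if G.Adj i j then (1 : ℝ) else 0

-- `sp*(G)`: the SDP relaxation of the surplus.
noncomputable def spStar {V : Type*} [Fintype V] (G : SimpleGraph V) : ℝ :=
  sSup {x : ℝ | ∃ M : Matrix V V ℝ, M.PosSemidef ∧ (∀ i, M i i ≤ 1) ∧
    x = (1 / 2) * ∑ i, ∑ j, (-(adjMat G)) i j * M i j}

-- Energy bound: `sp*(G) ≥ (1/2) ∑_{i : λ_i ≤ 0} (-λ_i) = (1/4) E(G)`.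
theorem stmt8 (n : ℕ) (G : SimpleGraph (Fin n))
    (μ : Fin n → ℝ) (v : Fin n → Fin n → ℝ)
    (hmono : Antitone μ)
    (heig : ∀ i, (adjMat G).mulVec (v i) = μ i • v i)
    (horth : ∀ i j : Fin n, (∑ k, v i k * v j k) = if i = j then (1 : ℝ) else 0)
 :
    (1 / 2) * (∑ i ∈ Finset.univ.filter (fun i => μ i ≤ 0), (-(μ i))) ≤ spStar G ∧
    (1 / 2) * (∑ i ∈ Finset.univ.filter (fun i => μ i ≤ 0), (-(μ i))) =
      (1 / 4) * ∑ i, |μ i| := by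
  classical
  set A := adjMat G with hA
  have hAbd : ∀ k j, (0:ℝ) ≤ A k j ∧ A k j ≤ 1 := by
    intro k j
    simp only [hA, adjMat, Matrix.of_apply]
    split_ifs <;> norm_num
  -- eigen relation entrywise
  have heig' : ∀ i k, (∑ j, A k j * v i j) = μ i * v i k := by
    intro i k
    have := congrFun (heig i) k
    simpa [Matrix.mulVec, dotProduct, Pi.smul_apply, smul_eq_mul] using this
  -- column orthonormality
  have hcol : ∀ k l : Fin n, (∑ i, v i k * v i l) = if k = l then (1:ℝ) else 0 := by
    have h1 : (Matrix.of v) * (Matrix.of v).transpose = 1 := by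
      ext i j
      simpa [Matrix.mul_apply, Matrix.one_apply] using horth i j
    have h2 : (Matrix.of v).transpose * (Matrix.of v) = 1 := mul_eq_one_comm.mp h1
    intro k l
    have := congrFun (congrFun h2 k) l
    simpa [Matrix.mul_apply, Matrix.one_apply] using this
  have hAdiag : ∀ k, A k k = 0 := by
    intro k; simp [hA, adjMat]
  -- trace is zero, so ∑ μ = 0
  have hsum0 : (∑ i, μ i) = 0 := by
    have key : ∀ i, μ i = ∑ k, ∑ j, v i k * (A k j * v i j) := by
      intro i
      calc μ i = μ i * (∑ k, v i k * v i k) := by rw [horth i i]; simp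
        _ = ∑ k, v i k * (μ i * v i k) := by
            rw [Finset.mul_sum]; exact Finset.sum_congr rfl fun k _ => by ring
        _ = ∑ k, v i k * (∑ j, A k j * v i j) := by
            exact Finset.sum_congr rfl fun k _ => by rw [heig' i k]
        _ = ∑ k, ∑ j, v i k * (A k j * v i j) := by
            exact Finset.sum_congr rfl fun k _ => by rw [Finset.mul_sum]
    calc (∑ i, μ i) = ∑ i, ∑ k, ∑ j, v i k * (A k j * v i j) :=
          Finset.sum_congr rfl fun i _ => key i
      _ = ∑ k, ∑ i, ∑ j, v i k * (A k j * v i j) := Finset.sum_comm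
      _ = ∑ k, ∑ j, ∑ i, v i k * (A k j * v i j) :=
          Finset.sum_congr rfl fun k _ => Finset.sum_comm
      _ = ∑ k, ∑ j, A k j * (∑ i, v i k * v i j) := by
          refine Finset.sum_congr rfl fun k _ => Finset.sum_congr rfl fun j _ => ?_
          rw [Finset.mul_sum]; exact Finset.sum_congr rfl fun i _ => by ring
      _ = ∑ k, ∑ j, A k j * (if k = j then (1:ℝ) else 0) := by
          refine Finset.sum_congr rfl fun k _ => Finset.sum_congr rfl fun j _ => ?_
          rw [hcol k j]
      _ = ∑ k, A k k := by
          refine Finset.sum_congr rfl fun k _ => ?_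
          simp
      _ = 0 := by simp [hAdiag]
  set S := Finset.univ.filter (fun i => μ i ≤ 0) with hS
  -- second part
  have habs : (∑ i, |μ i|) = 2 * ∑ i ∈ S, (-(μ i)) := by
    have hsplit := Finset.sum_filter_add_sum_filter_not Finset.univ (fun i => μ i ≤ 0) μ
    have h1 : ∑ i ∈ S, |μ i| = ∑ i ∈ S, (-(μ i)) := by
      refine Finset.sum_congr rfl fun i hi => ?_
      exact abs_of_nonpos (Finset.mem_filter.mp hi).2
    have h2 : ∑ i ∈ Finset.univ.filter (fun i => ¬ μ i ≤ 0), |μ i|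
        = ∑ i ∈ Finset.univ.filter (fun i => ¬ μ i ≤ 0), μ i := by
      refine Finset.sum_congr rfl fun i hi => ?_
      exact abs_of_pos (lt_of_not_ge (Finset.mem_filter.mp hi).2)
    have h3 : ∑ i ∈ Finset.univ.filter (fun i => ¬ μ i ≤ 0), μ i = ∑ i ∈ S, (-(μ i)) := by
      have : ∑ i ∈ S, μ i + ∑ i ∈ Finset.univ.filter (fun i => ¬ μ i ≤ 0), μ i = 0 := by
        rw [hsplit]; exact hsum0
      have := eq_neg_of_add_eq_zero_right this
      rw [this, ← Finset.sum_neg_distrib]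
    calc (∑ i, |μ i|) = ∑ i ∈ S, |μ i|
          + ∑ i ∈ Finset.univ.filter (fun i => ¬ μ i ≤ 0), |μ i| :=
          (Finset.sum_filter_add_sum_filter_not Finset.univ (fun i => μ i ≤ 0) _).symm
      _ = ∑ i ∈ S, (-(μ i)) + ∑ i ∈ S, (-(μ i)) := by rw [h1, h2, h3]
      _ = 2 * ∑ i ∈ S, (-(μ i)) := by ring
  refine ⟨?_, by rw [habs]; ring⟩
  -- first part: exhibit the witness matrix
  set B : Matrix (Fin n) (Fin n) ℝ :=
    Matrix.of (fun i k => if μ i ≤ 0 then v i k else 0) with hB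
  set M : Matrix (Fin n) (Fin n) ℝ := B.transpose * B with hM
  have hMentry : ∀ k l, M k l = ∑ i, (if μ i ≤ 0 then v i k * v i l else 0) := by
    intro k l
    simp only [hM, Matrix.mul_apply, Matrix.transpose_apply, hB, Matrix.of_apply]
    refine Finset.sum_congr rfl fun i _ => ?_
    split_ifs <;> simp
  have hMpsd : M.PosSemidef := by
    have := Matrix.posSemidef_conjTranspose_mul_self B
    simpa [Matrix.conjTranspose_eq_transpose_of_trivial, hM] using this
  have hMdiag : ∀ k, M k k ≤ 1 := by
    intro k
    rw [hMentry k k]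
    calc (∑ i, if μ i ≤ 0 then v i k * v i k else 0) ≤ ∑ i, v i k * v i k := by
          refine Finset.sum_le_sum fun i _ => ?_
          split_ifs with h
          · exact le_refl _
          · exact mul_self_nonneg _
      _ = 1 := by rw [hcol k k]; simp
  -- the value achieved by M
  have hval : (1 / 2) * (∑ i ∈ S, (-(μ i)))
      = (1 / 2) * ∑ k, ∑ j, (-(adjMat G)) k j * M k j := by
    have key : (∑ k, ∑ j, A k j * M k j) = ∑ i ∈ S, μ i := by
      calc (∑ k, ∑ j, A k j * M k j)
          = ∑ k, ∑ j, ∑ i, (if μ i ≤ 0 then A k j * (v i k * v i j) else 0) := by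
            refine Finset.sum_congr rfl fun k _ => Finset.sum_congr rfl fun j _ => ?_
            rw [hMentry k j, Finset.mul_sum]
            refine Finset.sum_congr rfl fun i _ => ?_
            split_ifs <;> simp
        _ = ∑ k, ∑ i, ∑ j, (if μ i ≤ 0 then A k j * (v i k * v i j) else 0) :=
            Finset.sum_congr rfl fun k _ => Finset.sum_comm
        _ = ∑ i, ∑ k, ∑ j, (if μ i ≤ 0 then A k j * (v i k * v i j) else 0) :=
            Finset.sum_comm
        _ = ∑ i, (if μ i ≤ 0 then ∑ k, ∑ j, A k j * (v i k * v i j) else 0) := by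
            refine Finset.sum_congr rfl fun i _ => ?_
            split_ifs <;> simp
        _ = ∑ i, (if μ i ≤ 0 then μ i else 0) := by
            refine Finset.sum_congr rfl fun i _ => ?_
            split_ifs with h
            · calc (∑ k, ∑ j, A k j * (v i k * v i j))
                  = ∑ k, v i k * (∑ j, A k j * v i j) := by
                    refine Finset.sum_congr rfl fun k _ => ?_
                    rw [Finset.mul_sum]
                    exact Finset.sum_congr rfl fun j _ => by ring
                _ = ∑ k, v i k * (μ i * v i k) := by
                    exact Finset.sum_congr rfl fun k _ => by rw [heig' i k]
                _ = μ i * ∑ k, v i k * v i k := by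
                    rw [Finset.mul_sum]; exact Finset.sum_congr rfl fun k _ => by ring
                _ = μ i := by rw [horth i i]; simp
            · rfl
        _ = ∑ i ∈ S, μ i := by rw [hS, Finset.sum_filter]
    have : (∑ k, ∑ j, (-(adjMat G)) k j * M k j) = - ∑ k, ∑ j, A k j * M k j := by
      rw [← Finset.sum_neg_distrib]
      refine Finset.sum_congr rfl fun k _ => ?_
      rw [← Finset.sum_neg_distrib]
      refine Finset.sum_congr rfl fun j _ => ?_
      simp [hA]
    rw [this, key, ← Finset.sum_neg_distrib]
  -- boundedness of the defining set
  have hbdd : BddAbove {x : ℝ | ∃ M : Matrix (Fin n) (Fin n) ℝ, M.PosSemidef ∧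
      (∀ i, M i i ≤ 1) ∧ x = (1 / 2) * ∑ i, ∑ j, (-(adjMat G)) i j * M i j} := by
    refine ⟨(1/2) * (n^2 : ℝ), fun x hx => ?_⟩
    obtain ⟨N, hNpsd, hNdiag, rfl⟩ := hx
    have hterm : ∀ k j : Fin n, (-(adjMat G)) k j * N k j ≤ 1 := by
      intro k j
      by_cases hadj : G.Adj k j
      · have hkj : k ≠ j := G.ne_of_adj hadj
        have hAkj : (-(adjMat G)) k j = -1 := by simp [adjMat, hadj]
        rw [hAkj]
        -- use PSD with vector e_k + e_j
        have hq := hNpsd.dotProduct_mulVec_nonneg (fun a => (if a = k then (1:ℝ) else 0) + (if a = j then 1 else 0))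
        have hform : dotProduct
            (star (fun a => (if a = k then (1:ℝ) else 0) + (if a = j then 1 else 0)))
            (N.mulVec (fun a => (if a = k then (1:ℝ) else 0) + (if a = j then 1 else 0)))
            = N k k + N k j + (N j k + N j j) := by
          simp [Matrix.mulVec, dotProduct, mul_add, add_mul, mul_ite, ite_mul,
            mul_one, mul_zero, one_mul, zero_mul, Finset.sum_add_distrib, Finset.sum_ite_eq,
            Finset.sum_ite_eq']
          ring
        rw [hform] at hq
        have hsym : N j k = N k j := by
          have := congrFun (congrFun hNpsd.1 j) k
          simpa [Matrix.conjTranspose, Matrix.transpose_apply] using this.symm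
        have hkk := hNdiag k
        have hjj := hNdiag j
        nlinarith
      · have : (-(adjMat G)) k j = 0 := by simp [adjMat, hadj]
        rw [this]; norm_num
    have : (∑ k, ∑ j, (-(adjMat G)) k j * N k j) ≤ ∑ k : Fin n, ∑ j : Fin n, (1:ℝ) := by
      exact Finset.sum_le_sum fun k _ => Finset.sum_le_sum fun j _ => hterm k j
    have hn : (∑ k : Fin n, ∑ j : Fin n, (1:ℝ)) = (n^2 : ℝ) := by
      simp; ring
    nlinarith
  rw [show spStar G = _ from rfl]
  refine le_csSup hbdd ?_
  exact ⟨M, hMpsd, hMdiag, hval⟩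
end

section
/- For any graph G on n vertices, the least adjacency eigenvalue satisfies −λ_n ≤ (2n · sp*(G))^(1/3). -/
open Matrix in
lemma neg_entry_le_one {m : Type*} [Fintype m] [DecidableEq m] {M : Matrix m m ℝ}
    (h : M.PosSemidef) (hd : ∀ i, M i i ≤ 1) (i j : m) : -(M i j) ≤ 1 := by
  have hsym : M j i = M i j := by
    conv_lhs => rw [← h.1]
    simp [Matrix.conjTranspose_apply]
  have key := h.dotProduct_mulVec_nonneg ((Pi.single i 1 : m → ℝ) + (1 : ℝ) • (Pi.single j 1 : m → ℝ))
  have hq : dotProduct ((Pi.single i 1 : m → ℝ) + (1:ℝ) • (Pi.single j 1 : m → ℝ))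
      (M *ᵥ ((Pi.single i 1 : m → ℝ) + (1:ℝ) • (Pi.single j 1 : m → ℝ)))
      = M i i + (1:ℝ) * (M i j + M j i) + (1:ℝ)^2 * M j j := by
    simp only [Matrix.mulVec_add, Matrix.mulVec_smul, Matrix.mulVec_single,
      dotProduct_add, add_dotProduct, smul_dotProduct, dotProduct_smul,
      single_dotProduct, smul_eq_mul]
    simp [dotProduct_single]
    ring
  rw [star_trivial, hq, hsym] at key
  have := hd i
  have := hd j
  linarith

open Matrix in
lemma spStar_bddAbove {V : Type*} [Fintype V] [DecidableEq V] (G : SimpleGraph V) :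
    BddAbove {x : ℝ | ∃ M : Matrix V V ℝ, M.PosSemidef ∧ (∀ i, M i i ≤ 1) ∧
      x = (1 / 2) * ∑ i, ∑ j, (-(adjMat G)) i j * M i j} := by
  refine ⟨(1/2) * ((Fintype.card V : ℝ) * (Fintype.card V : ℝ)), ?_⟩
  rintro x ⟨M, hM, hd, rfl⟩
  have hterm : ∀ i j : V, (-(adjMat G)) i j * M i j ≤ 1 := by
    intro i j
    have hne := neg_entry_le_one hM hd i j
    by_cases hadj : G.Adj i j
    · simp only [Matrix.neg_apply, adjMat, Matrix.of_apply, hadj, if_true]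
      linarith
    · simp [adjMat, hadj]
  have h1 : ∀ i : V, ∑ j, (-(adjMat G)) i j * M i j ≤ (Fintype.card V : ℝ) := by
    intro i
    calc ∑ j, (-(adjMat G)) i j * M i j ≤ ∑ _j : V, (1:ℝ) :=
          Finset.sum_le_sum fun j _ => hterm i j
      _ = (Fintype.card V : ℝ) := by simp
  have h2 : ∑ i, ∑ j, (-(adjMat G)) i j * M i j
      ≤ (Fintype.card V : ℝ) * (Fintype.card V : ℝ) := by
    calc ∑ i, ∑ j, (-(adjMat G)) i j * M i j ≤ ∑ _i : V, (Fintype.card V : ℝ) :=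
          Finset.sum_le_sum fun i _ => h1 i
      _ = (Fintype.card V : ℝ) * (Fintype.card V : ℝ) := by
          simp [mul_comm]
  linarith

open Matrix in
lemma spStar_nonneg {V : Type*} [Fintype V] [DecidableEq V] (G : SimpleGraph V) :
    0 ≤ spStar G := by
  apply le_csSup (spStar_bddAbove G)
  exact ⟨0, Matrix.PosSemidef.zero, fun i => by simp, by simp⟩

-- Least eigenvalue bound: `-λₙ ≤ (2 n sp*(G)) ^ (1/3)`.
theorem stmt9 (n : ℕ) (hn : 0 < n) (G : SimpleGraph (Fin n))
    (μ : Fin n → ℝ) (v : Fin n → Fin n → ℝ)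
    (hmono : Antitone μ)
    (heig : ∀ i, (adjMat G).mulVec (v i) = μ i • v i)
    (horth : ∀ i j : Fin n, (∑ k, v i k * v j k) = if i = j then (1 : ℝ) else 0)
 :
    -(μ ⟨n - 1, by omega⟩) ≤ (2 * (n : ℝ) * spStar G) ^ ((1 : ℝ) / 3) := by
  set ln : Fin n := ⟨n - 1, by omega⟩ with hln
  set lam : ℝ := μ ln with hlamdef
  set w : Fin n → ℝ := v ln with hwdef
  have hw2 : ∑ k, w k * w k = 1 := by simpa using horth ln ln
  have hAw : ∀ k, (∑ l, adjMat G k l * w l) = lam * w k := by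
    intro k
    have := congrFun (heig ln) k
    simpa [Matrix.mulVec, dotProduct] using this
  rcases le_or_gt 0 lam with hlam | hlam
  · have h1 : -lam ≤ 0 := by linarith
    have h2 : (0:ℝ) ≤ (2 * (n : ℝ) * spStar G) ^ ((1 : ℝ) / 3) := by
      apply Real.rpow_nonneg
      have := spStar_nonneg G
      positivity
    linarith
  · -- main case : lam < 0
    obtain ⟨p, -, hp⟩ := Finset.exists_max_image Finset.univ (fun k => (w k)^2)
      ⟨ln, Finset.mem_univ ln⟩
    have hp' : ∀ k : Fin n, (w k)^2 ≤ (w p)^2 := fun k => hp k (Finset.mem_univ k)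
    set s : ℝ := (w p)^2 with hsdef
    have hs0 : 0 < s := by
      rcases lt_or_ge 0 s with h | h
      · exact h
      · exfalso
        have hall : ∀ k, w k = 0 := by
          intro k
          nlinarith [hp' k, sq_nonneg (w k)]
        have hz : ∑ k, w k * w k = 0 := Finset.sum_eq_zero fun k _ => by rw [hall k]; ring
        rw [hw2] at hz
        norm_num at hz
    set M : Matrix (Fin n) (Fin n) ℝ := Matrix.of fun i j => (w i * w j) / s with hMdef
    have hPSD : M.PosSemidef := by
      refine Matrix.PosSemidef.of_dotProduct_mulVec_nonneg ?_ ?_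
      · ext i j
        simp [M, Matrix.conjTranspose_apply, mul_comm]
      · intro x
        rw [star_trivial]
        have hquad : dotProduct x (M.mulVec x) = (∑ k, w k * x k)^2 / s := by
          simp only [dotProduct, Matrix.mulVec, Matrix.of_apply, M]
          calc ∑ k, x k * ∑ l, (w k * w l / s) * x l
              = ∑ k, (w k * x k) * ((∑ l, w l * x l) / s) := by
                refine Finset.sum_congr rfl fun k _ => ?_
                rw [show ∑ l, (w k * w l / s) * x l = (w k / s) * ∑ l, w l * x l from by
                  rw [Finset.mul_sum]; exact Finset.sum_congr rfl fun l _ => by ring]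
                ring
            _ = (∑ k, w k * x k) * ((∑ l, w l * x l) / s) := by
                rw [← Finset.sum_mul]
            _ = (∑ k, w k * x k)^2 / s := by ring
        rw [hquad]
        positivity
    have hdiag : ∀ i, M i i ≤ 1 := by
      intro i
      have : w i * w i ≤ s := by nlinarith [hp' i]
      simp only [M, Matrix.of_apply]
      rw [div_le_one hs0]
      exact this
    have hval : ∑ i, ∑ j, (-(adjMat G)) i j * M i j = -(lam / s) := by
      have h1 : ∀ i : Fin n, ∑ j, (-(adjMat G)) i j * M i j
          = -((lam / s) * (w i * w i)) := by
        intro i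
        have : ∑ j, (-(adjMat G)) i j * M i j
            = -((w i / s) * ∑ j, adjMat G i j * w j) := by
          rw [Finset.mul_sum, ← Finset.sum_neg_distrib]
          refine Finset.sum_congr rfl fun j _ => ?_
          simp only [M, Matrix.of_apply, Matrix.neg_apply]
          ring
        rw [this, hAw i]
        ring
      calc ∑ i, ∑ j, (-(adjMat G)) i j * M i j
          = ∑ i, -((lam / s) * (w i * w i)) := Finset.sum_congr rfl fun i _ => h1 i
        _ = -((lam / s) * ∑ i, w i * w i) := by
            rw [Finset.mul_sum, ← Finset.sum_neg_distrib]
        _ = -(lam / s) := by rw [hw2]; ring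
    have hmem : (1/2 : ℝ) * (-(lam / s)) ∈ {x : ℝ | ∃ M : Matrix (Fin n) (Fin n) ℝ,
        M.PosSemidef ∧ (∀ i, M i i ≤ 1) ∧
        x = (1 / 2) * ∑ i, ∑ j, (-(adjMat G)) i j * M i j} :=
      ⟨M, hPSD, hdiag, by rw [hval]⟩
    have hsp : (1/2 : ℝ) * (-(lam / s)) ≤ spStar G :=
      le_csSup (spStar_bddAbove G) hmem
    -- bound lam^2 * s ≤ n
    have hbound : lam^2 * s ≤ (n : ℝ) := by
      have h1 : lam * w p = ∑ k, adjMat G p k * w k := (hAw p).symm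
      have h2 : |∑ k, adjMat G p k * w k| ≤ ∑ k, |w k| := by
        calc |∑ k, adjMat G p k * w k| ≤ ∑ k, |adjMat G p k * w k| :=
              Finset.abs_sum_le_sum_abs _ _
          _ ≤ ∑ k, |w k| := by
              refine Finset.sum_le_sum fun k _ => ?_
              rw [abs_mul]
              by_cases hadj : G.Adj p k
              · simp [adjMat, hadj]
              · simp [adjMat, hadj, abs_nonneg]
      have h3 : (∑ k, |w k|)^2 ≤ (n : ℝ) := by
        have := sq_sum_le_card_mul_sum_sq (s := (Finset.univ : Finset (Fin n)))
          (f := fun k => |w k|)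
        have hcard : ((Finset.univ : Finset (Fin n)).card : ℝ) = (n : ℝ) := by simp
        have hsq : ∑ k, |w k|^2 = 1 := by
          have he : ∀ k : Fin n, |w k|^2 = w k * w k := fun k => by rw [sq_abs, sq]
          rw [Finset.sum_congr rfl fun k _ => he k, hw2]
        calc (∑ k, |w k|)^2 ≤ ((Finset.univ : Finset (Fin n)).card : ℝ) * ∑ k, |w k|^2 := by
              exact_mod_cast this
          _ = (n : ℝ) := by rw [hcard, hsq, mul_one]
      have h4 : lam^2 * s = (lam * w p)^2 := by rw [hsdef]; ring
      have h5 : (lam * w p)^2 ≤ (∑ k, |w k|)^2 := by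
        rw [h1]
        have hab := abs_le.mp h2
        exact sq_le_sq' hab.1 hab.2
      linarith [h4 ▸ le_trans h5 h3]
    have hneg : (0:ℝ) < -lam := by linarith
    have hnpos : (0:ℝ) < (n : ℝ) := by exact_mod_cast hn
    have hstep : (-lam)^3 / (2 * (n:ℝ)) ≤ (1/2 : ℝ) * (-(lam / s)) := by
      have heq : (1/2 : ℝ) * (-(lam / s)) = (-lam) / (2 * s) := by
        field_simp
      rw [heq, div_le_div_iff₀ (by positivity) (by positivity)]
      nlinarith [mul_le_mul_of_nonneg_left hbound hneg.le]
    have hcube : (-lam)^3 ≤ 2 * (n:ℝ) * spStar G := by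
      have := le_trans hstep hsp
      rw [div_le_iff₀ (by positivity)] at this
      linarith [this]
    have hfin : -lam = ((-lam)^3) ^ ((1:ℝ)/3) := by
      rw [← Real.rpow_natCast (-lam) 3, ← Real.rpow_mul hneg.le]
      norm_num
    calc -lam = ((-lam)^3) ^ ((1:ℝ)/3) := hfin
      _ ≤ (2 * (n:ℝ) * spStar G) ^ ((1:ℝ)/3) :=
          Real.rpow_le_rpow (by positivity) hcube (by norm_num)
end

section
/- Let G be a graph on n vertices with adjacency eigenvalues λ_1 ≥ ⋯ ≥ λ_n and corresponding orthonormal eigenvectors v_1, …, v_n ∈ ℝⁿ. Then for every vector q ∈ ℝⁿ, ∑_{i : λ_i ≥ 0} ∑_{j : λ_j < 0} λ_i (−λ_j) ⟨v_i ∘ v_j, q⟩² ≤ n^(1/3) (2 sp*(G))^(4/3) ‖q‖_∞², where v_i ∘ v_j denotes the entrywise (Hadamard) product of the vectors v_i and v_j. -/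
section Aux
open Matrix

variable {n : ℕ} {G : SimpleGraph (Fin n)}

lemma adjMat_nonneg (G : SimpleGraph (Fin n)) (i j : Fin n) : 0 ≤ adjMat G i j := by
  by_cases h : G.Adj i j <;> simp [adjMat, h]

lemma adjMat_le_one (G : SimpleGraph (Fin n)) (i j : Fin n) : adjMat G i j ≤ 1 := by
  by_cases h : G.Adj i j <;> simp [adjMat, h]

lemma adjMat_symm (G : SimpleGraph (Fin n)) (i j : Fin n) : adjMat G i j = adjMat G j i := by
  by_cases h : G.Adj i j
  · simp [adjMat, h, h.symm]
  · have h2 : ¬ G.Adj j i := fun hh => h hh.symm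
    simp [adjMat, h, h2]

lemma dot_mulVec_expand (B : Matrix (Fin n) (Fin n) ℝ) (x : Fin n → ℝ) :
    x ⬝ᵥ (B *ᵥ x) = ∑ k, ∑ l, B k l * (x k * x l) := by
  simp only [dotProduct, Matrix.mulVec, Finset.mul_sum]
  exact Finset.sum_congr rfl fun k _ => Finset.sum_congr rfl fun l _ => by ring


variable {v : Fin n → Fin n → ℝ}

lemma row_orth (horth : ∀ i j : Fin n, (∑ k, v i k * v j k) = if i = j then (1 : ℝ) else 0) :
    Matrix.of v * (Matrix.of v)ᵀ = 1 := by
  ext i j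
  simp only [Matrix.mul_apply, Matrix.transpose_apply, Matrix.of_apply, Matrix.one_apply]
  exact horth i j

lemma col_sq (horth : ∀ i j : Fin n, (∑ k, v i k * v j k) = if i = j then (1 : ℝ) else 0)
    (k : Fin n) : ∑ j, (v j k) ^ 2 = 1 := by
  have h1 : (Matrix.of v)ᵀ * Matrix.of v = 1 := by
    rw [mul_eq_one_comm]; exact row_orth horth
  have h2 := congrArg (fun M => M k k) h1
  simp only [Matrix.mul_apply, Matrix.transpose_apply, Matrix.of_apply, Matrix.one_apply_eq] at h2
  rw [← h2]
  exact Finset.sum_congr rfl fun j _ => by ring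

lemma bessel (horth : ∀ i j : Fin n, (∑ k, v i k * v j k) = if i = j then (1 : ℝ) else 0)
    (w : Fin n → ℝ) (S : Finset (Fin n)) :
    ∑ j ∈ S, (∑ k, v j k * w k) ^ 2 ≤ ∑ k, (w k) ^ 2 := by
  have hsub : ∑ j ∈ S, (∑ k, v j k * w k) ^ 2 ≤ ∑ j, (∑ k, v j k * w k) ^ 2 :=
    Finset.sum_le_sum_of_subset_of_nonneg (Finset.subset_univ S)
      (fun j _ _ => sq_nonneg _)
  refine hsub.trans (le_of_eq ?_)
  have h1 : (Matrix.of v)ᵀ * Matrix.of v = 1 := by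
    rw [mul_eq_one_comm]; exact row_orth horth
  have key : (Matrix.of v *ᵥ w) ⬝ᵥ (Matrix.of v *ᵥ w) = w ⬝ᵥ w := by
    rw [Matrix.dotProduct_mulVec, ← Matrix.mulVec_transpose, Matrix.mulVec_mulVec, h1,
      Matrix.one_mulVec]
  have h2 : ∀ j, (Matrix.of v *ᵥ w) j = ∑ k, v j k * w k := fun j => rfl
  calc ∑ j, (∑ k, v j k * w k) ^ 2
      = (Matrix.of v *ᵥ w) ⬝ᵥ (Matrix.of v *ᵥ w) := by
        simp only [dotProduct, h2]
        exact Finset.sum_congr rfl fun j _ => by ring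
    _ = w ⬝ᵥ w := key
    _ = ∑ k, (w k) ^ 2 := by
        simp only [dotProduct]
        exact Finset.sum_congr rfl fun k _ => by ring


/-- entries of a PSD matrix with diagonal ≤ 1 are bounded by 1 in absolute value -/
lemma psd_entry_abs_le (M : Matrix (Fin n) (Fin n) ℝ) (hM : M.PosSemidef)
    (hd : ∀ i, M i i ≤ 1) (k l : Fin n) : |M k l| ≤ 1 := by
  by_cases hkl : k = l
  · subst hkl
    have h0 : (0:ℝ) ≤ M k k := by
      have := hM.dotProduct_mulVec_nonneg (Pi.single k 1)
      simpa [dotProduct, Matrix.mulVec, Pi.single_apply] using this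
    rw [abs_of_nonneg h0]; exact hd k
  · have hlk : ¬ l = k := fun h => hkl h.symm
    have quad : ∀ a b : ℝ,
        0 ≤ a * a * M k k + a * b * M k l + b * a * M l k + b * b * M l l := by
      intro a b
      set x : Fin n → ℝ := fun m => if m = k then a else if m = l then b else 0 with hxdef
      have hx : ∀ y : Fin n → ℝ, x ⬝ᵥ y = a * y k + b * y l := by
        intro y
        have : ∀ m, x m * y m
            = (if m = k then a * y m else 0) + (if m = l then b * y m else 0) := by
          intro m
          by_cases h1 : m = k
          · have hml : ¬ m = l := fun h => hkl (h1.symm.trans h)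
            rw [if_pos h1, if_neg hml]
            have hxa : x m = a := by simp [hxdef, h1]
            rw [hxa, add_zero]
          · by_cases h2 : m = l
            · rw [if_neg h1, if_pos h2]
              have hxb : x m = b := by simp [hxdef, h1, h2, hlk]
              rw [hxb, zero_add]
            · have hx0 : x m = 0 := by simp [hxdef, h1, h2]
              rw [if_neg h1, if_neg h2, hx0, zero_mul, add_zero]
        simp only [dotProduct, this, Finset.sum_add_distrib,
          Finset.sum_ite_eq' Finset.univ, Finset.mem_univ, if_true]
      have hmv : ∀ m, (M *ᵥ x) m = M m k * a + M m l * b := by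
        intro m
        have : ∀ j, M m j * x j
            = (if j = k then M m j * a else 0) + (if j = l then M m j * b else 0) := by
          intro j
          by_cases h1 : j = k
          · have hml : ¬ j = l := fun h => hkl (h1.symm.trans h)
            rw [if_pos h1, if_neg hml]
            have hxa : x j = a := by simp [hxdef, h1]
            rw [hxa, add_zero]
          · by_cases h2 : j = l
            · rw [if_neg h1, if_pos h2]
              have hxb : x j = b := by simp [hxdef, h1, h2, hlk]
              rw [hxb, zero_add]
            · have hx0 : x j = 0 := by simp [hxdef, h1, h2]
              rw [if_neg h1, if_neg h2, hx0, mul_zero, add_zero]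
        simp only [Matrix.mulVec, dotProduct, this, Finset.sum_add_distrib,
          Finset.sum_ite_eq' Finset.univ, Finset.mem_univ, if_true]
      have hval : x ⬝ᵥ (M *ᵥ x) = a * a * M k k + a * b * M k l + b * a * M l k + b * b * M l l := by
        rw [hx (M *ᵥ x), hmv k, hmv l]; ring
      have h := hM.dotProduct_mulVec_nonneg x
      rw [star_trivial, hval] at h
      exact h
    have hsym : M l k = M k l := by
      have := hM.1
      have h2 := congrFun (congrFun this k) l
      simpa [Matrix.conjTranspose_apply] using h2
    have h1 := quad 1 1
    have h2 := quad 1 (-1)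
    rw [hsym] at h1 h2
    have hkk := hd k; have hll := hd l
    rw [abs_le]; constructor <;> nlinarith

lemma spSet_bddAbove (G : SimpleGraph (Fin n)) :
    BddAbove {x : ℝ | ∃ M : Matrix (Fin n) (Fin n) ℝ, M.PosSemidef ∧ (∀ i, M i i ≤ 1) ∧
      x = (1 / 2) * ∑ i, ∑ j, (-(adjMat G)) i j * M i j} := by
  refine ⟨(n : ℝ) ^ 2 / 2, ?_⟩
  rintro x ⟨M, hM, hd, rfl⟩
  have hterm : ∀ k l : Fin n, (-(adjMat G)) k l * M k l ≤ 1 := by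
    intro k l
    have h1 : |M k l| ≤ 1 := psd_entry_abs_le M hM hd k l
    have h2 : |(-(adjMat G)) k l| ≤ 1 := by
      rw [Matrix.neg_apply, abs_neg, abs_of_nonneg (adjMat_nonneg G k l)]
      exact adjMat_le_one G k l
    calc (-(adjMat G)) k l * M k l ≤ |(-(adjMat G)) k l * M k l| := le_abs_self _
      _ = |(-(adjMat G)) k l| * |M k l| := abs_mul _ _
      _ ≤ 1 * 1 := mul_le_mul h2 h1 (abs_nonneg _) zero_le_one
      _ = 1 := one_mul 1
  have hsum : ∑ i, ∑ j, (-(adjMat G)) i j * M i j ≤ (n : ℝ) ^ 2 := by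
    calc ∑ i, ∑ j, (-(adjMat G)) i j * M i j
        ≤ ∑ _i : Fin n, ∑ _j : Fin n, (1 : ℝ) :=
          Finset.sum_le_sum fun i _ => Finset.sum_le_sum fun j _ => hterm i j
      _ = (n : ℝ) ^ 2 := by simp [Finset.sum_const]; ring
  linarith

lemma spStar_mem_le (G : SimpleGraph (Fin n)) (M : Matrix (Fin n) (Fin n) ℝ)
    (h1 : M.PosSemidef) (h2 : ∀ i, M i i ≤ 1) :
    (1 / 2) * ∑ i, ∑ j, (-(adjMat G)) i j * M i j ≤ spStar G :=
  le_csSup (spSet_bddAbove G) ⟨M, h1, h2, rfl⟩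

lemma spStar_nonneg_s10 (G : SimpleGraph (Fin n)) : 0 ≤ spStar G := by
  have := spStar_mem_le G 0 Matrix.PosSemidef.zero (fun i => by norm_num)
  simpa using this

lemma quad_eig {μ : Fin n → ℝ}
    (heig : ∀ i, (adjMat G).mulVec (v i) = μ i • v i)
    (horth : ∀ i j : Fin n, (∑ k, v i k * v j k) = if i = j then (1 : ℝ) else 0)
    (j : Fin n) : v j ⬝ᵥ (adjMat G *ᵥ v j) = μ j := by
  rw [heig j]
  have hvv : v j ⬝ᵥ v j = 1 := by
    have := horth j j; simpa [dotProduct] using this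
  rw [dotProduct_smul, smul_eq_mul, hvv, mul_one]

lemma sum_outer_swap (B : Matrix (Fin n) (Fin n) ℝ) (c : Fin n → ℝ) (v : Fin n → Fin n → ℝ) :
    ∑ i, ∑ l, B i l * (∑ j, c j * (v j i * v j l)) = ∑ j, c j * (v j ⬝ᵥ (B *ᵥ v j)) := by
  have hinner : ∀ i, ∑ l, B i l * (∑ j, c j * (v j i * v j l))
      = ∑ j, c j * (v j i * ∑ l, B i l * v j l) := by
    intro i
    simp only [Finset.mul_sum]
    rw [Finset.sum_comm]
    exact Finset.sum_congr rfl fun j _ => Finset.sum_congr rfl fun l _ => by ring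
  simp only [hinner]
  rw [Finset.sum_comm]
  refine Finset.sum_congr rfl fun j _ => ?_
  simp only [dotProduct, Matrix.mulVec, Finset.mul_sum]

/-- certificate lemma: weighted sums of outer products of the `v j` -/
lemma cert {μ : Fin n → ℝ}
    (heig : ∀ i, (adjMat G).mulVec (v i) = μ i • v i)
    (horth : ∀ i j : Fin n, (∑ k, v i k * v j k) = if i = j then (1 : ℝ) else 0)
    (c : Fin n → ℝ) (hc : ∀ j, 0 ≤ c j)
    (hdiag : ∀ k, ∑ j, c j * (v j k) ^ 2 ≤ 1) :
    ∑ j, c j * (-(μ j)) ≤ 2 * spStar G := by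
  set M : Matrix (Fin n) (Fin n) ℝ :=
    Matrix.of (fun k l => ∑ j, c j * (v j k * v j l)) with hMdef
  have hsymm : M.IsHermitian := by
    ext k l
    simp only [Matrix.conjTranspose_apply, hMdef, Matrix.of_apply, star_trivial]
    exact Finset.sum_congr rfl fun j _ => by ring
  have hpos : ∀ x : Fin n → ℝ, 0 ≤ star x ⬝ᵥ (M *ᵥ x) := by
    intro x
    rw [star_trivial, dot_mulVec_expand]
    have : ∑ k, ∑ l, M k l * (x k * x l) = ∑ j, c j * (∑ k, v j k * x k) ^ 2 := by
      have h1 : ∀ k, ∑ l, M k l * (x k * x l)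
          = ∑ j, c j * ((v j k * x k) * ∑ l, v j l * x l) := by
        intro k
        simp only [hMdef, Matrix.of_apply, Finset.sum_mul, Finset.mul_sum]
        rw [Finset.sum_comm]
        exact Finset.sum_congr rfl fun j _ => Finset.sum_congr rfl fun l _ => by ring
      simp only [h1]
      rw [Finset.sum_comm]
      refine Finset.sum_congr rfl fun j _ => ?_
      rw [← Finset.mul_sum, ← Finset.sum_mul]
      ring
    rw [this]
    exact Finset.sum_nonneg fun j _ => mul_nonneg (hc j) (sq_nonneg _)
  have hdg : ∀ k, M k k ≤ 1 := by
    intro k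
    have : M k k = ∑ j, c j * (v j k) ^ 2 := by
      simp only [hMdef, Matrix.of_apply]
      exact Finset.sum_congr rfl fun j _ => by ring
    rw [this]; exact hdiag k
  have hval : (1 / 2) * ∑ i, ∑ l, (-(adjMat G)) i l * M i l
      = (1 / 2) * ∑ j, c j * (-(μ j)) := by
    congr 1
    rw [show (∑ i, ∑ l, (-(adjMat G)) i l * M i l)
        = ∑ j, c j * (v j ⬝ᵥ ((-(adjMat G)) *ᵥ v j)) from sum_outer_swap _ c v]
    refine Finset.sum_congr rfl fun j _ => ?_
    rw [Matrix.neg_mulVec, dotProduct_neg, quad_eig heig horth j]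
  have hle := spStar_mem_le G M (Matrix.PosSemidef.of_dotProduct_mulVec_nonneg hsymm hpos) hdg
  rw [hval] at hle
  linarith


lemma trace_adjMat (G : SimpleGraph (Fin n)) : (adjMat G).trace = 0 := by
  rw [Matrix.trace]
  refine Finset.sum_eq_zero fun i _ => ?_
  simp [Matrix.diag, adjMat]

lemma sum_mu_eq_zero {μ : Fin n → ℝ}
    (heig : ∀ i, (adjMat G).mulVec (v i) = μ i • v i)
    (horth : ∀ i j : Fin n, (∑ k, v i k * v j k) = if i = j then (1 : ℝ) else 0) :
    ∑ i, μ i = 0 := by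
  have h1 : (Matrix.of v)ᵀ * Matrix.of v = 1 := by
    rw [mul_eq_one_comm]; exact row_orth horth
  have htr : (Matrix.of v * adjMat G * (Matrix.of v)ᵀ).trace = 0 := by
    rw [Matrix.trace_mul_cycle, h1, Matrix.one_mul, trace_adjMat]
  rw [Matrix.trace] at htr
  rw [← htr]
  refine Finset.sum_congr rfl fun i _ => ?_
  have : (Matrix.of v * adjMat G * (Matrix.of v)ᵀ).diag i
      = v i ⬝ᵥ (adjMat G *ᵥ v i) := by
    simp only [Matrix.diag, Matrix.mul_apply, Matrix.transpose_apply, Matrix.of_apply,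
      dotProduct, Matrix.mulVec, Finset.sum_mul, Finset.mul_sum]
    exact Finset.sum_congr rfl fun k _ => Finset.sum_congr rfl fun l _ => by
      rw [adjMat_symm G l k]; ring
  rw [this, quad_eig heig horth i]

end Aux


-- The key cross-term bound in terms of `sp*(G)`.
theorem stmt10 (n : ℕ) (G : SimpleGraph (Fin n))
    (μ : Fin n → ℝ) (v : Fin n → Fin n → ℝ)
    (hmono : Antitone μ)
    (heig : ∀ i, (adjMat G).mulVec (v i) = μ i • v i)
    (horth : ∀ i j : Fin n, (∑ k, v i k * v j k) = if i = j then (1 : ℝ) else 0)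
    (q : Fin n → ℝ) :
    (∑ i ∈ Finset.univ.filter (fun i => 0 ≤ μ i),
      ∑ j ∈ Finset.univ.filter (fun j => μ j < 0),
        μ i * (-(μ j)) * (∑ k, (v i k * v j k) * q k) ^ 2) ≤
      (n : ℝ) ^ ((1 : ℝ) / 3) * (2 * spStar G) ^ ((4 : ℝ) / 3) * ‖q‖ ^ 2 := by
  classical
  set σ := 2 * spStar G with hσdef
  have hσ0 : 0 ≤ σ := by have := spStar_nonneg_s10 G; rw [hσdef]; linarith
  set Q := ‖q‖ ^ 2 with hQdef
  have hQ0 : (0:ℝ) ≤ Q := sq_nonneg _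
  have hqk : ∀ k, (q k) ^ 2 ≤ Q := by
    intro k
    have h := norm_le_pi_norm q k
    rw [Real.norm_eq_abs] at h
    calc q k ^ 2 = |q k| ^ 2 := (sq_abs _).symm
      _ ≤ ‖q‖ ^ 2 := by gcongr
  set T := ((n : ℝ) * σ) ^ ((1:ℝ)/3) with hTdef
  have hnσ0 : 0 ≤ (n:ℝ) * σ := mul_nonneg (Nat.cast_nonneg n) hσ0
  have hT0 : 0 ≤ T := Real.rpow_nonneg hnσ0 _
  have hrow : ∀ i, ∑ k, (v i k) ^ 2 = 1 := by
    intro i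
    have h := horth i i
    rw [if_pos rfl] at h
    rw [← h]
    exact Finset.sum_congr rfl fun k _ => by ring
  -- every negative eigenvalue is at most T in absolute value
  have hneg : ∀ j : Fin n, μ j < 0 → -μ j ≤ T := by
    intro j hj
    obtain ⟨k0, -, hk0⟩ := Finset.exists_max_image Finset.univ (fun k => (v j k) ^ 2)
      ⟨j, Finset.mem_univ j⟩
    have hsum1 : ∑ k, (v j k) ^ 2 = 1 := hrow j
    have hpos : 0 < (v j k0) ^ 2 := by
      rcases lt_or_ge 0 ((v j k0) ^ 2) with h1 | h1
      · exact h1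
      · exfalso
        have hz : ∑ k, (v j k) ^ 2 ≤ 0 :=
          Finset.sum_nonpos fun k _ => le_trans (hk0 k (Finset.mem_univ k)) h1
        rw [hsum1] at hz; linarith
    set h := (v j k0) ^ 2 with hhdef
    have hcw : ∀ j', 0 ≤ (fun j' => if j' = j then 1 / h else 0) j' := by
      intro j'
      by_cases hh : j' = j
      · simp only [hh, if_pos rfl]; positivity
      · simp [hh]
    have hcd : ∀ k, ∑ j', (if j' = j then 1 / h else 0) * (v j' k) ^ 2 ≤ 1 := by
      intro k
      have he : ∑ j', (if j' = j then 1 / h else 0) * (v j' k) ^ 2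
          = (1 / h) * (v j k) ^ 2 := by
        simp only [ite_mul, zero_mul]
        rw [Finset.sum_ite_eq' Finset.univ j]
        simp
      rw [he]
      have hle := hk0 k (Finset.mem_univ k)
      calc (1 / h) * (v j k) ^ 2 ≤ (1 / h) * h :=
            mul_le_mul_of_nonneg_left hle (by positivity)
        _ = 1 := by field_simp
    have hcval := cert (G := G) heig horth _ hcw hcd
    have he2 : ∑ j', (if j' = j then 1 / h else 0) * (-(μ j')) = (1 / h) * (-(μ j)) := by
      simp only [ite_mul, zero_mul]
      rw [Finset.sum_ite_eq' Finset.univ j]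
      simp
    rw [he2] at hcval
    have hcert : (1 / h) * (-(μ j)) ≤ σ := by rw [hσdef]; exact hcval
    have heigk : ∑ l, adjMat G k0 l * v j l = μ j * v j k0 := by
      have h1 := congrFun (heig j) k0
      simpa [Matrix.mulVec, dotProduct] using h1
    have hA2 : ∑ l, (adjMat G k0 l) ^ 2 ≤ (n : ℝ) := by
      calc ∑ l, (adjMat G k0 l) ^ 2 ≤ ∑ _l : Fin n, (1:ℝ) := by
            refine Finset.sum_le_sum fun l _ => ?_
            have h0 := adjMat_nonneg G k0 l
            have h1 := adjMat_le_one G k0 l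
            nlinarith
        _ = (n : ℝ) := by simp
    have hcs : (μ j) ^ 2 * h ≤ (n : ℝ) := by
      have h1 : (μ j * v j k0) ^ 2 ≤ (∑ l, (adjMat G k0 l) ^ 2) * (∑ l, (v j l) ^ 2) := by
        rw [← heigk]
        exact Finset.sum_mul_sq_le_sq_mul_sq Finset.univ _ _
      rw [hsum1, mul_one] at h1
      calc (μ j) ^ 2 * h = (μ j * v j k0) ^ 2 := by rw [hhdef]; ring
        _ ≤ (n : ℝ) := h1.trans hA2
    have hcube : (-(μ j)) ^ 3 ≤ (n:ℝ) * σ := by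
      have e1 : (-(μ j)) ^ 3 = ((1 / h) * (-(μ j))) * ((μ j) ^ 2 * h) := by
        field_simp
      rw [e1]
      have hmm : 0 ≤ (μ j) ^ 2 * h := by positivity
      calc ((1 / h) * (-(μ j))) * ((μ j) ^ 2 * h) ≤ σ * (n:ℝ) :=
            mul_le_mul hcert hcs hmm hσ0
        _ = (n:ℝ) * σ := mul_comm _ _
    have ha0 : (0:ℝ) ≤ -μ j := by linarith
    have hx3 : -μ j = (((-μ j) ^ (3:ℕ) : ℝ)) ^ ((1:ℝ)/3) := by
      rw [← Real.rpow_natCast (-μ j) 3, ← Real.rpow_mul ha0]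
      norm_num
    rw [hx3, hTdef]
    refine Real.rpow_le_rpow (by positivity) ?_ (by norm_num)
    exact_mod_cast hcube
  -- sum of negative eigenvalues is at most σ
  have hsneg : ∑ j ∈ Finset.univ.filter (fun j => μ j < 0), (-(μ j)) ≤ σ := by
    have hcw : ∀ j', (0:ℝ) ≤ (fun j' => if μ j' < 0 then (1:ℝ) else 0) j' := by
      intro j'; by_cases hh : μ j' < 0 <;> simp [hh]
    have hcd : ∀ k, ∑ j', (if μ j' < 0 then (1:ℝ) else 0) * (v j' k) ^ 2 ≤ 1 := by
      intro k
      calc ∑ j', (if μ j' < 0 then (1:ℝ) else 0) * (v j' k) ^ 2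
          ≤ ∑ j', (v j' k) ^ 2 := by
            refine Finset.sum_le_sum fun j' _ => ?_
            by_cases hh : μ j' < 0
            · simp [hh]
            · simp only [hh, if_neg, if_false, zero_mul]
              positivity
        _ = 1 := col_sq horth k
    have hcval := cert (G := G) heig horth _ hcw hcd
    have he : ∑ j', (if μ j' < 0 then (1:ℝ) else 0) * (-(μ j'))
        = ∑ j ∈ Finset.univ.filter (fun j => μ j < 0), (-(μ j)) := by
      rw [Finset.sum_filter]
      exact Finset.sum_congr rfl fun j' _ => by
        by_cases hh : μ j' < 0 <;> simp [hh]
    rw [he] at hcval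
    rw [hσdef]; exact hcval
  -- positive part equals negative part
  have hspos : ∑ i ∈ Finset.univ.filter (fun i => 0 ≤ μ i), μ i
      = ∑ j ∈ Finset.univ.filter (fun j => μ j < 0), (-(μ j)) := by
    have h0 := sum_mu_eq_zero (G := G) heig horth
    have hsp := Finset.sum_filter_add_sum_filter_not Finset.univ (fun i => 0 ≤ μ i) μ
    have hef : Finset.univ.filter (fun i => ¬ 0 ≤ μ i) = Finset.univ.filter (fun j => μ j < 0) := by
      refine Finset.filter_congr fun x _ => ?_
      simp [not_le]
    rw [hef, h0] at hsp
    have : ∑ j ∈ Finset.univ.filter (fun j => μ j < 0), (-(μ j))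
        = -∑ j ∈ Finset.univ.filter (fun j => μ j < 0), μ j := by
      rw [← Finset.sum_neg_distrib]
    rw [this]
    linarith
  -- main chain
  have inner : ∀ i ∈ Finset.univ.filter (fun i => 0 ≤ μ i),
      (∑ j ∈ Finset.univ.filter (fun j => μ j < 0),
        μ i * (-(μ j)) * (∑ k, (v i k * v j k) * q k) ^ 2) ≤ μ i * (T * Q) := by
    intro i hi
    have hi0 : 0 ≤ μ i := (Finset.mem_filter.mp hi).2
    have hb : ∑ j ∈ Finset.univ.filter (fun j => μ j < 0),
        (∑ k, (v i k * v j k) * q k) ^ 2 ≤ Q := by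
      calc ∑ j ∈ Finset.univ.filter (fun j => μ j < 0), (∑ k, (v i k * v j k) * q k) ^ 2
          = ∑ j ∈ Finset.univ.filter (fun j => μ j < 0),
              (∑ k, v j k * (v i k * q k)) ^ 2 := by
            refine Finset.sum_congr rfl fun j _ => ?_
            congr 1
            exact Finset.sum_congr rfl fun k _ => by ring
        _ ≤ ∑ k, (v i k * q k) ^ 2 := bessel horth _ _
        _ ≤ ∑ k, (v i k) ^ 2 * Q := by
            refine Finset.sum_le_sum fun k _ => ?_
            have hk := hqk k
            nlinarith [sq_nonneg (v i k)]
        _ = Q := by rw [← Finset.sum_mul, hrow i, one_mul]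
    calc ∑ j ∈ Finset.univ.filter (fun j => μ j < 0),
          μ i * (-(μ j)) * (∑ k, (v i k * v j k) * q k) ^ 2
        = μ i * ∑ j ∈ Finset.univ.filter (fun j => μ j < 0),
            (-(μ j)) * (∑ k, (v i k * v j k) * q k) ^ 2 := by
          rw [Finset.mul_sum]
          exact Finset.sum_congr rfl fun j _ => by ring
      _ ≤ μ i * (T * Q) := by
          refine mul_le_mul_of_nonneg_left ?_ hi0
          calc ∑ j ∈ Finset.univ.filter (fun j => μ j < 0),
                (-(μ j)) * (∑ k, (v i k * v j k) * q k) ^ 2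
              ≤ ∑ j ∈ Finset.univ.filter (fun j => μ j < 0),
                T * (∑ k, (v i k * v j k) * q k) ^ 2 := by
                refine Finset.sum_le_sum fun j hj => ?_
                exact mul_le_mul_of_nonneg_right
                  (hneg j (Finset.mem_filter.mp hj).2) (sq_nonneg _)
            _ = T * ∑ j ∈ Finset.univ.filter (fun j => μ j < 0),
                (∑ k, (v i k * v j k) * q k) ^ 2 := by rw [Finset.mul_sum]
            _ ≤ T * Q := mul_le_mul_of_nonneg_left hb hT0
  calc (∑ i ∈ Finset.univ.filter (fun i => 0 ≤ μ i),
      ∑ j ∈ Finset.univ.filter (fun j => μ j < 0),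
        μ i * (-(μ j)) * (∑ k, (v i k * v j k) * q k) ^ 2)
      ≤ ∑ i ∈ Finset.univ.filter (fun i => 0 ≤ μ i), μ i * (T * Q) :=
        Finset.sum_le_sum inner
    _ = (∑ i ∈ Finset.univ.filter (fun i => 0 ≤ μ i), μ i) * (T * Q) :=
        (Finset.sum_mul _ _ _).symm
    _ ≤ σ * (T * Q) := by
        refine mul_le_mul_of_nonneg_right ?_ (mul_nonneg hT0 hQ0)
        rw [hspos]; exact hsneg
    _ = (n : ℝ) ^ ((1 : ℝ) / 3) * σ ^ ((4 : ℝ) / 3) * Q := by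
        rw [hTdef, Real.mul_rpow (Nat.cast_nonneg n) hσ0]
        rw [show (4:ℝ)/3 = 1 + 1/3 by norm_num, Real.rpow_add' hσ0 (by norm_num), Real.rpow_one]
        ring
end
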